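/- (Semantic correctness of the axiom for ⋠, equation (4).) For all a b : α: a ∉ F {c : α | stage(c) < stage(b)} if and only if stage(a) > stage(b) or stage(a) = f + 1. That is, a is not derivable from the atoms derived strictly before b exactly when a is not derived before b. -/

import Mathlib

/-!
The stages `S j = F^[j] ∅` increase and are constant from `j = f` on, so `a ∈ S l` iff
`stage a ≤ min l f`. As stages are positive, the atoms of stage below `stage b` form
`S (stage b - 1)`, whose image under `F` is `S (stage b)`.
-/

/- The stage of an atom `a` under the staged fixed-point computation
(Algorithm 2): the least `l` with `a ∈ F^[l] ∅` if `a` belongs to the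
fixed point `F^[f] ∅`, and `f + 1` otherwise. -/
open Classical in
noncomputable def stage {α : Type*} (F : Set α → Set α) (f : ℕ) (a : α) : ℕ :=
  if a ∈ F^[f] (∅ : Set α) then sInf {l : ℕ | a ∈ F^[l] (∅ : Set α)} else f + 1

section Stages

variable {α : Type*} {F : Set α → Set α} {f : ℕ}

theorem monotone_iterate_empty (hF : Monotone F) : Monotone fun j => F^[j] (∅ : Set α) :=
  hF.monotone_iterate_of_le_map (Set.empty_subset _)

theorem iterate_empty_eq_of_le (hf : F^[f + 1] ∅ = F^[f] ∅) {j : ℕ} (hj : f ≤ j) :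
    F^[j] (∅ : Set α) = F^[f] ∅ := by
  have hfix : F (F^[f] ∅) = F^[f] ∅ := (Function.iterate_succ_apply' F f ∅).symm.trans hf
  rw [← Nat.sub_add_cancel hj, Function.iterate_add_apply, Function.iterate_fixed hfix]

theorem stage_le_succ (a : α) : stage F f a ≤ f + 1 := by
  unfold stage
  split_ifs with ha
  · exact (Nat.sInf_le ha).trans f.le_succ
  · exact le_rfl

theorem mem_iterate_empty_iff (hF : Monotone F) (hf : F^[f + 1] ∅ = F^[f] ∅) (a : α) (l : ℕ) :
    a ∈ F^[l] (∅ : Set α) ↔ stage F f a ≤ l ∧ stage F f a ≤ f := by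
  constructor
  · intro hl
    have haf : a ∈ F^[f] (∅ : Set α) := by
      rcases le_total l f with h | h
      · exact monotone_iterate_empty hF h hl
      · rwa [iterate_empty_eq_of_le hf h] at hl
    rw [stage, if_pos haf]
    exact ⟨Nat.sInf_le hl, Nat.sInf_le haf⟩
  · rintro ⟨hl, hsf⟩
    have haf : a ∈ F^[f] (∅ : Set α) := by
      by_contra ha
      rw [stage, if_neg ha] at hsf
      omega
    rw [stage, if_pos haf] at hl
    exact monotone_iterate_empty hF hl (Nat.sInf_mem (s := {l | a ∈ F^[l] ∅}) ⟨f, haf⟩)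

theorem stage_pos (hF : Monotone F) (hf : F^[f + 1] ∅ = F^[f] ∅) (a : α) : 0 < stage F f a := by
  by_contra! h
  exact Set.notMem_empty a ((mem_iterate_empty_iff hF hf a 0).2 ⟨h, h.trans f.zero_le⟩)

theorem setOf_stage_lt_succ (hF : Monotone F) (hf : F^[f + 1] ∅ = F^[f] ∅) {l : ℕ} (hl : l ≤ f) :
    {c : α | stage F f c < l + 1} = F^[l] ∅ := by
  ext c
  rw [Set.mem_ofPred_eq, mem_iterate_empty_iff hF hf]
  omega

end Stages

theorem nle_axiom_correct_general
    {α : Type*} (F : Set α → Set α) (hF : Monotone F)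
    (f : ℕ) (hf : F^[f + 1] ∅ = F^[f] ∅) :
    ∀ a b : α,
      a ∉ F {c : α | stage F f c < stage F f b} ↔
        stage F f a > stage F f b ∨ stage F f a = f + 1 := by
  intro a b
  have ha := stage_le_succ (F := F) (f := f) a
  have hb := stage_le_succ (F := F) (f := f) b
  obtain ⟨l, hl⟩ := Nat.exists_eq_succ_of_ne_zero (stage_pos hF hf b).ne'
  rw [hl, setOf_stage_lt_succ hF hf (by omega), ← Function.iterate_succ_apply' F l,
    mem_iterate_empty_iff hF hf]
  omega

theorem nle_axiom_correct
    {α : Type*} [Fintype α] (F : Set α → Set α) (hF : Monotone F)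
    (f : ℕ) (hf : F^[f + 1] ∅ = F^[f] ∅)
    (hfmin : ∀ j : ℕ, F^[j + 1] ∅ = F^[j] ∅ → f ≤ j) :
    ∀ a b : α,
      a ∉ F {c : α | stage F f c < stage F f b} ↔
        stage F f a > stage F f b ∨ stage F f a = f + 1 :=
  nle_axiom_correct_general F hF f hf
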